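/- The 12-vertex graph K_3 * C_4 is vertex-transitive, is triangle-free, has independence number 4, and has chromatic number 3. -/
import Mathlib

set_option maxRecDepth 8000

/-- The graph `G * C₄` (also written `C * G`): vertex set `V(G) × ℤ₄`; for every vertex `u` of
`G` the vertices `(u,c)` induce a 4-cycle in the cyclic order of `ℤ₄`, and for every edge `uv`
of `G` the pairs `(u,c)(v,c+2)` are edges. -/
def starC4 {α : Type*} (G : SimpleGraph α) : SimpleGraph (α × ZMod 4) :=
  SimpleGraph.fromRel (fun p q =>
    (p.1 = q.1 ∧ q.2 = p.2 + 1) ∨ (G.Adj p.1 q.1 ∧ q.2 = p.2 + 2))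

instance : DecidableRel (starC4 (⊤ : SimpleGraph (Fin 3))).Adj := fun a b =>
  decidable_of_iff _ (SimpleGraph.fromRel_adj _ a b).symm

/-- the automorphisms coming from a permutation of `Fin 3` and a rotation of `ZMod 4`. -/
def myIso (σ : Equiv.Perm (Fin 3)) (k : ZMod 4) :
    starC4 (⊤ : SimpleGraph (Fin 3)) ≃g starC4 (⊤ : SimpleGraph (Fin 3)) where
  toEquiv := Equiv.prodCongr σ (Equiv.addRight k)
  map_rel_iff' := by
    intro a b
    simp only [Equiv.prodCongr_apply, Equiv.coe_addRight, Prod.map, starC4,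
      SimpleGraph.fromRel_adj, SimpleGraph.top_adj, ne_eq, Prod.ext_iff,
      EmbeddingLike.apply_eq_iff_eq, add_right_comm _ k 1, add_right_comm _ k 2,
      add_left_inj]

lemma noTriangle : ∀ a b c : Fin 3 × ZMod 4,
    ¬((starC4 (⊤ : SimpleGraph (Fin 3))).Adj a b ∧
      (starC4 (⊤ : SimpleGraph (Fin 3))).Adj a c ∧
      (starC4 (⊤ : SimpleGraph (Fin 3))).Adj b c) := by decide

lemma key : ∀ A B C : Finset (ZMod 4),
    ((∀ c, ¬(c ∈ A ∧ c + 1 ∈ A)) ∧ (∀ c, ¬(c ∈ B ∧ c + 1 ∈ B)) ∧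
     (∀ c, ¬(c ∈ C ∧ c + 1 ∈ C)) ∧
     (∀ c, ¬(c ∈ A ∧ c + 2 ∈ B)) ∧ (∀ c, ¬(c ∈ A ∧ c + 2 ∈ C)) ∧
     (∀ c, ¬(c ∈ B ∧ c + 2 ∈ C))) →
    A.card + B.card + C.card ≤ 4 := by decide

lemma adjSame (u : Fin 3) (c : ZMod 4) :
    (starC4 (⊤ : SimpleGraph (Fin 3))).Adj (u, c) (u, c + 1) := by
  rw [starC4, SimpleGraph.fromRel_adj]
  exact ⟨by simp only [ne_eq, Prod.mk.injEq, left_eq_add]; decide, Or.inl (Or.inl ⟨rfl, rfl⟩)⟩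

lemma adjCross {u v : Fin 3} (h : u ≠ v) (c : ZMod 4) :
    (starC4 (⊤ : SimpleGraph (Fin 3))).Adj (u, c) (v, c + 2) := by
  rw [starC4, SimpleGraph.fromRel_adj]
  exact ⟨by simp [Prod.ext_iff, h], Or.inl (Or.inr ⟨by simpa using h, rfl⟩)⟩

lemma fin2cycle : ∀ a b c d e : Fin 2,
    ¬(a ≠ b ∧ b ≠ c ∧ c ≠ d ∧ d ≠ e ∧ e ≠ a) := by decide

/-- the 12-vertex graph `K₃ * C₄` is vertex-transitive, triangle-free, has
independence number `4` and chromatic number `3`. -/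
theorem k3_star_c4_properties :
    (∀ u v : Fin 3 × ZMod 4,
      ∃ e : starC4 (⊤ : SimpleGraph (Fin 3)) ≃g starC4 (⊤ : SimpleGraph (Fin 3)), e u = v) ∧
    (starC4 (⊤ : SimpleGraph (Fin 3))).CliqueFree 3 ∧
    (∃ s : Finset (Fin 3 × ZMod 4),
      (↑s : Set (Fin 3 × ZMod 4)).Pairwise
        (fun a b => ¬ (starC4 (⊤ : SimpleGraph (Fin 3))).Adj a b) ∧ s.card = 4) ∧
    (∀ s : Finset (Fin 3 × ZMod 4),
      (↑s : Set (Fin 3 × ZMod 4)).Pairwise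
        (fun a b => ¬ (starC4 (⊤ : SimpleGraph (Fin 3))).Adj a b) → s.card ≤ 4) ∧
    (starC4 (⊤ : SimpleGraph (Fin 3))).chromaticNumber = 3 := by
  set G := starC4 (⊤ : SimpleGraph (Fin 3)) with hG
  refine ⟨?_, ?_, ?_, ?_, ?_⟩
  · -- vertex-transitive
    intro u v
    refine ⟨myIso (Equiv.swap u.1 v.1) (v.2 - u.2), ?_⟩
    show (Equiv.prodCongr (Equiv.swap u.1 v.1) (Equiv.addRight (v.2 - u.2))) u = v
    simp only [Equiv.prodCongr_apply, Equiv.coe_addRight, Prod.map,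
      Equiv.swap_apply_left]
    rw [show u.2 + (v.2 - u.2) = v.2 by ring]
  · -- triangle-free
    intro t ht
    rw [SimpleGraph.is3Clique_iff] at ht
    obtain ⟨a, b, c, hab, hac, hbc, rfl⟩ := ht
    exact noTriangle a b c ⟨hab, hac, hbc⟩
  · -- independent set of size 4
    refine ⟨{((0 : Fin 3), (0 : ZMod 4)), (0, 2), (1, 1), (1, 3)}, ?_, by decide⟩
    intro a ha b hb hne
    have ha' : a ∈ ({((0 : Fin 3), (0 : ZMod 4)), (0, 2), (1, 1), (1, 3)} :
      Finset (Fin 3 × ZMod 4)) := ha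
    have hb' : b ∈ ({((0 : Fin 3), (0 : ZMod 4)), (0, 2), (1, 1), (1, 3)} :
      Finset (Fin 3 × ZMod 4)) := hb
    revert ha' hb' hne
    revert a b
    decide
  · -- independence number at most 4
    intro s hs
    have hs' : ∀ a ∈ s, ∀ b ∈ s, a ≠ b → ¬ G.Adj a b := fun a ha b hb hne => hs ha hb hne
    set F : Fin 3 → Finset (ZMod 4) :=
      fun u => (s.filter (fun p => p.1 = u)).image Prod.snd with hF
    have hmem : ∀ u c, c ∈ F u ↔ (u, c) ∈ s := by
      intro u c
      simp only [hF, Finset.mem_image, Finset.mem_filter]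
      constructor
      · rintro ⟨p, ⟨hp, rfl⟩, rfl⟩; exact hp
      · intro h; exact ⟨(u, c), ⟨h, rfl⟩, rfl⟩
    have hcards : s.card = (F 0).card + (F 1).card + (F 2).card := by
      have h1 : s.card = ∑ u : Fin 3, (s.filter (fun p => p.1 = u)).card :=
        Finset.card_eq_sum_card_fiberwise (fun p _ => Finset.mem_univ p.1)
      have h2 : ∀ u : Fin 3, (F u).card = (s.filter (fun p => p.1 = u)).card := by
        intro u
        apply Finset.card_image_of_injOn
        intro p hp q hq hpq
        simp only [Finset.coe_filter, Set.mem_setOf_eq] at hp hq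
        exact Prod.ext (hp.2.trans hq.2.symm) hpq
      rw [h1, Fin.sum_univ_three, h2, h2, h2]
    have hsame : ∀ u c, ¬(c ∈ F u ∧ c + 1 ∈ F u) := by
      rintro u c ⟨h1, h2⟩
      rw [hmem] at h1 h2
      exact hs' _ h1 _ h2 (by simp only [ne_eq, Prod.mk.injEq, left_eq_add]; decide) (adjSame u c)
    have hcross : ∀ (u v : Fin 3), u ≠ v → ∀ c, ¬(c ∈ F u ∧ c + 2 ∈ F v) := by
      rintro u v huv c ⟨h1, h2⟩
      rw [hmem] at h1 h2
      exact hs' _ h1 _ h2 (by simp [Prod.ext_iff, huv]) (adjCross huv c)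
    rw [hcards]
    exact key (F 0) (F 1) (F 2)
      ⟨hsame 0, hsame 1, hsame 2, hcross 0 1 (by decide), hcross 0 2 (by decide),
       hcross 1 2 (by decide)⟩
  · -- chromatic number
    have hcol : G.Colorable 3 := by
      refine ⟨SimpleGraph.Coloring.mk
        (fun p => if p.2.val % 2 = 0 then p.1 else p.1 + 1) ?_⟩
      intro a b hab
      revert hab
      revert a b
      decide
    have h2 : ¬ G.Colorable 2 := by
      rintro ⟨C⟩
      exact fin2cycle (C (0, 0)) (C (0, 1)) (C (0, 2)) (C (1, 0)) (C (2, 2))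
        ⟨C.valid (by decide), C.valid (by decide), C.valid (by decide),
         C.valid (by decide), C.valid (by decide)⟩
    refine le_antisymm (by exact_mod_cast hcol.chromaticNumber_le) ?_
    have : ¬ G.chromaticNumber ≤ (2 : ℕ) := fun h =>
      h2 (SimpleGraph.chromaticNumber_le_iff_colorable.mp h)
    have h2lt : (2 : ℕ∞) < G.chromaticNumber := not_le.mp (by exact_mod_cast this)
    exact Order.add_one_le_of_lt h2lt
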